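/- arXiv:2109.02343 — 8 statements merged into one kernel-verified Lean document; each statement's English description precedes it below -/
import Mathlib

section
/- The relation ⪯_ι on r-multichains is antisymmetric: if 𝔭 ⪯_ι 𝔮 and 𝔮 ⪯_ι 𝔭 then 𝔭 = 𝔮. -/
/-- `p : ℕ → P` is an `r`-multichain: weakly increasing on indices `1,…,r`. -/
def IsMultichain {P : Type*} [PartialOrder P] (r : ℕ) (p : ℕ → P) : Prop :=
  ∀ i j, 1 ≤ i → i ≤ j → j ≤ r → p i ≤ p j

/-- `ι` is a strictly increasing map from `[r] = {1,…,r}` to `[2r]`. -/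
def StrictIncTo (r : ℕ) (ι : ℕ → ℕ) : Prop :=
  (∀ t, 1 ≤ t → t ≤ r → 1 ≤ ι t ∧ ι t ≤ 2 * r) ∧
  (∀ s t, 1 ≤ s → s < t → t ≤ r → ι s < ι t)

/-- The relation `𝔭 ⪯_ι 𝔮`: for all `t, s ∈ [r]`, `q s ≤ p t` if `s ≤ ι t − t`
(equivalently `s + t ≤ ι t`) and `p t ≤ q s` if `s > ι t − t`. -/
def MRel {P : Type*} [PartialOrder P] (r : ℕ) (ι : ℕ → ℕ) (p q : ℕ → P) : Prop :=
  ∀ t s, 1 ≤ t → t ≤ r → 1 ≤ s → s ≤ r →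
    (s + t ≤ ι t → q s ≤ p t) ∧ (ι t < s + t → p t ≤ q s)

namespace MRel

variable {P : Type*} [PartialOrder P] {r : ℕ} {ι : ℕ → ℕ} {p q : ℕ → P} {j : ℕ}

theorem apply_ge_of_add_self_le (h : MRel r ι p q) (hj : 1 ≤ j) (hjr : j ≤ r)
    (hιj : j + j ≤ ι j) : q j ≤ p j :=
  (h j j hj hjr hj hjr).1 hιj

theorem apply_le_of_lt_add_self (h : MRel r ι p q) (hj : 1 ≤ j) (hjr : j ≤ r)
    (hιj : ι j < j + j) : p j ≤ q j :=
  (h j j hj hjr hj hjr).2 hιj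

end MRel

theorem mrel_antisymm_general {P : Type*} [PartialOrder P] (r : ℕ) (ι : ℕ → ℕ) (p q : ℕ → P)
    (h1 : MRel r ι p q) (h2 : MRel r ι q p) :
    ∀ j, 1 ≤ j → j ≤ r → p j = q j := by
  intro j hj hjr
  -- Only the diagonal `s = t = j` is needed: there the sign of `ι j - 2j` fixes the
  -- direction of each relation, and swapping `p` and `q` reverses it.
  rcases le_or_gt (j + j) (ι j) with hιj | hιj
  · exact le_antisymm (h2.apply_ge_of_add_self_le hj hjr hιj)
      (h1.apply_ge_of_add_self_le hj hjr hιj)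
  · exact le_antisymm (h1.apply_le_of_lt_add_self hj hjr hιj)
      (h2.apply_le_of_lt_add_self hj hjr hιj)

/-- The relation ⪯_ι is antisymmetric. -/
theorem mrel_antisymm {P : Type*} [PartialOrder P] (r : ℕ) (hr : 1 ≤ r)
    (ι : ℕ → ℕ) (hι : StrictIncTo r ι)
    (p q : ℕ → P) (hp : IsMultichain r p) (hq : IsMultichain r q)
    (h1 : MRel r ι p q) (h2 : MRel r ι q p) :
    ∀ j, 1 ≤ j → j ≤ r → p j = q j :=
  mrel_antisymm_general r ι p q h1 h2
end

section
/- If r > 1, ι(j) = j for all j ∈ [r], and P contains two elements p < q, then the relation ⪯_ι is not reflexive: the r-multichain 𝔭 given by p_1 = ⋯ = p_{r−1} = p and p_r = q satisfies 𝔭 ⋠_ι 𝔭. -/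
/-- With `ι = id` the first clause of `MRel` is vacuous, since `s + t ≤ t` fails for `s ≥ 1`. -/
theorem mrel_id_iff {P : Type*} [PartialOrder P] (r : ℕ) (p q : ℕ → P) :
    MRel r (fun j => j) p q ↔
      ∀ t s, 1 ≤ t → t ≤ r → 1 ≤ s → s ≤ r → p t ≤ q s := by
  refine forall₄_congr fun t s _ _ => forall₂_congr fun hs _ => ?_
  have hts : t < s + t := Nat.lt_add_of_pos_left hs
  exact ⟨fun h => h.2 hts, fun h => ⟨fun hst => absurd hst hts.not_ge, fun _ => h⟩⟩

/-- For r > 1, ι = id and a chain p < q in P, the multichain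
p ≤ ⋯ ≤ p ≤ q is not related to itself, so ⪯_ι is not reflexive. -/
theorem id_not_reflexive {P : Type*} [PartialOrder P] (r : ℕ) (hr : 1 < r)
    (p q : P) (hpq : p < q) :
    ¬ MRel r (fun j => j)
        (fun i => if i < r then p else q) (fun i => if i < r then p else q) := by
  intro h
  have hqp := (mrel_id_iff r _ _).1 h r 1 hr.le le_rfl le_rfl hr.le
  simp only [lt_irrefl, if_false, if_pos hr] at hqp
  exact hpq.not_ge hqp
end

section
/- Duality: for all 𝔭, 𝔮 ∈ P_r, one has 𝔭 ⪯_ι 𝔮 if and only if 𝔮 ⪯_{ι*} 𝔭, where ι* : [r] → [2r] is the strictly increasing map whose image is the complement in [2r] of the image of ι. -/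
/-!
For `s, t ∈ [r]` put `m = s + t - 1`. Since `ι` is strictly increasing, `ι t ≤ m` iff at least
`t` values of `ι` lie in `[m]`; likewise for `ι'`. As the images of `ι` and `ι'` partition
`[2r]`, exactly `m` values of `ι` and `ι'` together lie in `[m]`. Hence `ι t > m` iff
`ι' s ≤ m`, i.e. `s + t ≤ ι t ↔ ι' s < s + t`, and the two relations impose literally the same
inequalities.
-/

open Finset

theorem Finset.card_filter_add_card_filter_of_compl {α : Type*} [DecidableEq α]
    {s A B : Finset α} (hAB : ∀ v ∈ s, v ∈ A ↔ v ∉ B) :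
    #{v ∈ s | v ∈ A} + #{v ∈ s | v ∈ B} = #s := by
  rw [filter_congr hAB, add_comm, card_filter_add_card_filter_not]

namespace StrictIncTo

variable {r : ℕ} {ι : ℕ → ℕ}

theorem strictMonoOn (hι : StrictIncTo r ι) : StrictMonoOn ι (Set.Icc 1 r) :=
  fun _ ha _ hb hab => hι.2 _ _ ha.1 hab hb.2

theorem le_iff_le_card_filter (hι : StrictIncTo r ι) (m : ℕ) {t : ℕ} (ht : t ∈ Icc 1 r) :
    ι t ≤ m ↔ t ≤ #{u ∈ Icc 1 r | ι u ≤ m} := by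
  rw [mem_Icc] at ht
  constructor
  · intro htm
    have hsub : Icc 1 t ⊆ {u ∈ Icc 1 r | ι u ≤ m} := by
      intro u hu
      rw [mem_Icc] at hu
      rw [mem_filter, mem_Icc]
      refine ⟨⟨hu.1, hu.2.trans ht.2⟩, le_trans ?_ htm⟩
      exact hι.strictMonoOn.monotoneOn ⟨hu.1, hu.2.trans ht.2⟩ ht hu.2
    simpa using card_le_card hsub
  · intro hcard
    by_contra! hmt
    have hsub : {u ∈ Icc 1 r | ι u ≤ m} ⊆ Ico 1 t := by
      intro u hu
      rw [mem_filter, mem_Icc] at hu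
      rw [mem_Ico]
      exact ⟨hu.1.1, (hι.strictMonoOn.lt_iff_lt hu.1 ht).1 (hu.2.trans_lt hmt)⟩
    have := card_le_card hsub
    simp only [Nat.card_Ico] at this
    omega

theorem card_filter_le_eq (hι : StrictIncTo r ι) (m : ℕ) :
    #{u ∈ Icc 1 r | ι u ≤ m} = #{v ∈ Icc 1 m | v ∈ (Icc 1 r).image ι} := by
  have himage : {v ∈ Icc 1 m | v ∈ (Icc 1 r).image ι} = {u ∈ Icc 1 r | ι u ≤ m}.image ι := by
    ext v
    simp only [mem_filter, mem_image, mem_Icc]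
    constructor
    · rintro ⟨⟨-, hvm⟩, u, hu, rfl⟩
      exact ⟨u, ⟨hu, hvm⟩, rfl⟩
    · rintro ⟨u, ⟨hu, hum⟩, rfl⟩
      exact ⟨⟨(hι.1 u hu.1 hu.2).1, hum⟩, u, hu, rfl⟩
  rw [himage, card_image_of_injOn]
  exact hι.strictMonoOn.injOn.mono fun u hu => by simpa using (mem_filter.1 hu).1

theorem add_le_iff_lt_add {ι' : ℕ → ℕ} (hι : StrictIncTo r ι) (hι' : StrictIncTo r ι')
    (hcomp : ∀ v ∈ Icc 1 (2 * r), v ∈ (Icc 1 r).image ι ↔ v ∉ (Icc 1 r).image ι')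
    {s : ℕ} (hs : s ∈ Icc 1 r) {t : ℕ} (ht : t ∈ Icc 1 r) :
    s + t ≤ ι t ↔ ι' s < s + t := by
  set m := s + t - 1
  have hm : m ≤ 2 * r := by simp only [mem_Icc] at hs ht; omega
  have hsum :=
    card_filter_add_card_filter_of_compl fun v hv => hcomp v (Icc_subset_Icc_right hm hv)
  rw [Nat.card_Icc, ← hι.card_filter_le_eq, ← hι'.card_filter_le_eq] at hsum
  have ht_le := hι.le_iff_le_card_filter m ht
  have hs_le := hι'.le_iff_le_card_filter m hs
  simp only [mem_Icc] at hs ht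
  omega

end StrictIncTo

theorem MRel.iff_swap_of_add_le_iff {P : Type*} [PartialOrder P] {r : ℕ} {ι ι' : ℕ → ℕ}
    {p q : ℕ → P} (h : ∀ s ∈ Icc 1 r, ∀ t ∈ Icc 1 r, s + t ≤ ι t ↔ ι' s < s + t) :
    MRel r ι p q ↔ MRel r ι' q p := by
  constructor
  · intro hpq t s ht1 htr hs1 hsr
    have hk := h t (mem_Icc.2 ⟨ht1, htr⟩) s (mem_Icc.2 ⟨hs1, hsr⟩)
    exact ⟨fun hle => (hpq s t hs1 hsr ht1 htr).2 (by omega),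
      fun hlt => (hpq s t hs1 hsr ht1 htr).1 (by omega)⟩
  · intro hqp t s ht1 htr hs1 hsr
    have hk := h s (mem_Icc.2 ⟨hs1, hsr⟩) t (mem_Icc.2 ⟨ht1, htr⟩)
    exact ⟨fun hle => (hqp s t hs1 hsr ht1 htr).2 (by omega),
      fun hlt => (hqp s t hs1 hsr ht1 htr).1 (by omega)⟩

theorem mrel_duality_general {P : Type*} [PartialOrder P] (r : ℕ)
    (ι ι' : ℕ → ℕ) (hι : StrictIncTo r ι) (hι' : StrictIncTo r ι')
    (hcomp : ∀ m, 1 ≤ m → m ≤ 2 * r →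
      ((∃ t, 1 ≤ t ∧ t ≤ r ∧ ι t = m) ↔ ¬ ∃ t, 1 ≤ t ∧ t ≤ r ∧ ι' t = m))
    (p q : ℕ → P) :
    MRel r ι p q ↔ MRel r ι' q p := by
  have hcomp' : ∀ v ∈ Icc 1 (2 * r), v ∈ (Icc 1 r).image ι ↔ v ∉ (Icc 1 r).image ι' := by
    intro v hv
    rw [mem_Icc] at hv
    simpa only [mem_Icc, mem_image, and_assoc] using hcomp v hv.1 hv.2
  exact MRel.iff_swap_of_add_le_iff fun s hs t ht => hι.add_le_iff_lt_add hι' hcomp' hs ht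

/-- Duality: 𝔭 ⪯_ι 𝔮 iff 𝔮 ⪯_{ι*} 𝔭, where ι* is the strictly increasing map
whose image is the complement in [2r] of the image of ι. -/
theorem mrel_duality {P : Type*} [PartialOrder P] (r : ℕ) (hr : 1 ≤ r)
    (ι ι' : ℕ → ℕ) (hι : StrictIncTo r ι) (hι' : StrictIncTo r ι')
    (hcomp : ∀ m, 1 ≤ m → m ≤ 2 * r →
      ((∃ t, 1 ≤ t ∧ t ≤ r ∧ ι t = m) ↔ ¬ ∃ t, 1 ≤ t ∧ t ≤ r ∧ ι' t = m))
    (p q : ℕ → P) (hp : IsMultichain r p) (hq : IsMultichain r q) :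
    MRel r ι p q ↔ MRel r ι' q p :=
  mrel_duality_general r ι ι' hι hι' hcomp p q
end

section
/- Suppose r ≥ 2 and P contains a chain of length one (two comparable distinct elements). Then the relation ⪯_ι on P_r is reflexive if and only if ι(t) ∈ {2t − 1, 2t} for every t ∈ [r]. -/
section

variable {P : Type*} [PartialOrder P] {r : ℕ} {ι : ℕ → ℕ} {x : ℕ → P} {s t : ℕ}

theorem IsMultichain.mrel_self (hx : IsMultichain r x)
    (hι : ∀ t, 1 ≤ t → t ≤ r → ι t = 2 * t - 1 ∨ ι t = 2 * t) : MRel r ι x x := by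
  intro t s ht htr hs hsr
  have hιt := hι t ht htr
  exact ⟨fun _ ↦ hx s t hs (by omega) htr, fun _ ↦ hx t s ht (by omega) hsr⟩

theorem MRel.add_le_of_lt (h : MRel r ι x x) (ht : 1 ≤ t) (htr : t ≤ r) (hs : 1 ≤ s)
    (hsr : s ≤ r) (hlt : x s < x t) : s + t ≤ ι t := by
  by_contra hι
  exact hlt.not_ge ((h t s ht htr hs hsr).2 (by omega))

theorem MRel.lt_add_of_lt (h : MRel r ι x x) (ht : 1 ≤ t) (htr : t ≤ r) (hs : 1 ≤ s)
    (hsr : s ≤ r) (hlt : x t < x s) : ι t < s + t := by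
  by_contra hι
  exact hlt.not_ge ((h t s ht htr hs hsr).1 (by omega))

def stepChain (p q : P) (k : ℕ) : ℕ → P := fun i ↦ if i ≤ k then p else q

theorem isMultichain_stepChain {p q : P} (hpq : p ≤ q) (r k : ℕ) :
    IsMultichain r (stepChain p q k) := by
  intro i j _ hij _
  unfold stepChain
  split_ifs <;> first | exact le_rfl | exact hpq | omega

theorem stepChain_lt_stepChain {p q : P} (hpq : p < q) {k i j : ℕ} (hi : i ≤ k) (hj : k < j) :
    stepChain p q k i < stepChain p q k j := by
  simpa [stepChain, hi, Nat.not_le.mpr hj] using hpq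

end

theorem reflexive_iff_general {P : Type*} [PartialOrder P] (r : ℕ)
    (p q : P) (hpq : p < q)
    (ι : ℕ → ℕ) (hι : StrictIncTo r ι) :
    (∀ x : ℕ → P, IsMultichain r x → MRel r ι x x) ↔
    (∀ t, 1 ≤ t → t ≤ r → ι t = 2 * t - 1 ∨ ι t = 2 * t) := by
  refine ⟨fun hrefl t ht htr ↦ ?_, fun h x hx ↦ hx.mrel_self h⟩
  have hrefl_step (k : ℕ) := hrefl _ (isMultichain_stepChain hpq.le r k)
  have lower : 2 * t - 1 ≤ ι t := by
    rcases Nat.lt_or_ge 1 t with ht1 | ht1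
    · have := (hrefl_step (t - 1)).add_le_of_lt ht htr (s := t - 1) (by omega) (by omega)
        (stepChain_lt_stepChain hpq le_rfl (by omega))
      omega
    · have := (hι.1 t ht htr).1
      omega
  have upper : ι t ≤ 2 * t := by
    rcases Nat.lt_or_ge t r with htr' | htr'
    · have := (hrefl_step t).lt_add_of_lt ht htr (s := t + 1) (by omega) htr'
        (stepChain_lt_stepChain hpq le_rfl (by omega))
      omega
    · have := (hι.1 t ht htr).2
      omega
  omega

/-- For r ≥ 2 and P containing a chain of length one, ⪯_ι is reflexive
iff ι t ∈ {2t−1, 2t} for all t ∈ [r]. -/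
theorem reflexive_iff {P : Type*} [PartialOrder P] (r : ℕ) (hr : 2 ≤ r)
    (p q : P) (hpq : p < q)
    (ι : ℕ → ℕ) (hι : StrictIncTo r ι) (h1 : ι 1 = 1) :
    (∀ x : ℕ → P, IsMultichain r x → MRel r ι x x) ↔
    (∀ t, 1 ≤ t → t ≤ r → ι t = 2 * t - 1 ∨ ι t = 2 * t) :=
  reflexive_iff_general r p q hpq ι hι
end

section
/- For the map ι defined by ι(1) = 1 and, for 2 ≤ t ≤ r, ι(t) = 2t if t is even and ι(t) = 2t − 1 if t is odd, the relation ⪯_ι is a partial order on P_r (reflexive, antisymmetric, and transitive). -/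
/-- The zig-zag map: `ι t = 2t` for even `t`, `ι t = 2t − 1` for odd `t` (so `ι 1 = 1`). -/
def zig : ℕ → ℕ := fun t => if t % 2 = 0 then 2 * t else 2 * t - 1

/-!
Writing `c t = 2 ⌊t/2⌋`, the relation `𝔭 ⪯_zig 𝔮` says `q s ≤ p t` for `s ≤ c t` and
`p t ≤ q s` for `s > c t`. Reflexivity on multichains holds because `t - 1 ≤ c t ≤ t`, and
antisymmetry holds for every `ι` by comparing the two relations at `s = t`. Transitivity
goes through the middle index `m = c t` (resp. `m = c t + 1`): since `c t` is even,
`c m = c t`, so `m` lies on the correct side of both thresholds.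
-/

lemma add_le_zig_iff {s t : ℕ} : s + t ≤ zig t ↔ s ≤ 2 * (t / 2) := by
  unfold zig; split <;> omega

lemma zig_lt_add_iff {s t : ℕ} : zig t < s + t ↔ 2 * (t / 2) < s := by
  simpa only [not_le] using add_le_zig_iff.not

section
variable {P : Type*} [PartialOrder P] {r : ℕ} {ι : ℕ → ℕ} {p q w : ℕ → P}

theorem MRel.refl_of_isMultichain (hι : ∀ t, ι t ≤ 2 * t ∧ 2 * t ≤ ι t + 1)
    (hp : IsMultichain r p) : MRel r ι p p := by
  intro t s ht htr hs hsr
  have := hι t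
  exact ⟨fun _ => hp s t hs (by omega) htr, fun _ => hp t s ht (by omega) hsr⟩

theorem MRel.antisymm (hpq : MRel r ι p q) (hqp : MRel r ι q p) {i : ℕ} (hi : 1 ≤ i)
    (hir : i ≤ r) : p i = q i := by
  have hpq_i := hpq i i hi hir hi hir
  have hqp_i := hqp i i hi hir hi hir
  by_cases h : i + i ≤ ι i
  · exact le_antisymm (hqp_i.1 h) (hpq_i.1 h)
  · rw [not_le] at h
    exact le_antisymm (hpq_i.2 h) (hqp_i.2 h)

theorem MRel.zig_trans (hpq : MRel r zig p q) (hqw : MRel r zig q w) : MRel r zig p w := by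
  intro t u ht htr hu hur
  constructor
  · intro h
    rw [add_le_zig_iff] at h
    have hm : 1 ≤ 2 * (t / 2) ∧ 2 * (t / 2) ≤ r := by omega
    calc w u ≤ q (2 * (t / 2)) := (hqw _ u hm.1 hm.2 hu hur).1 (add_le_zig_iff.2 (by omega))
      _ ≤ p t := (hpq t _ ht htr hm.1 hm.2).1 (add_le_zig_iff.2 (by omega))
  · intro h
    rw [zig_lt_add_iff] at h
    have hm : 1 ≤ 2 * (t / 2) + 1 ∧ 2 * (t / 2) + 1 ≤ r := by omega
    calc p t ≤ q (2 * (t / 2) + 1) :=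
          (hpq t _ ht htr hm.1 hm.2).2 (zig_lt_add_iff.2 (by omega))
      _ ≤ w u := (hqw _ u hm.1 hm.2 hu hur).2 (zig_lt_add_iff.2 (by omega))

end

theorem zigzag_partial_order_general {P : Type*} [PartialOrder P] (r : ℕ) :
    (∀ p : ℕ → P, IsMultichain r p → MRel r zig p p) ∧
    (∀ p q : ℕ → P, IsMultichain r p → IsMultichain r q →
      MRel r zig p q → MRel r zig q p → ∀ i, 1 ≤ i → i ≤ r → p i = q i) ∧
    (∀ p q s : ℕ → P, IsMultichain r p → IsMultichain r q → IsMultichain r s →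
      MRel r zig p q → MRel r zig q s → MRel r zig p s) := by
  have hzig : ∀ t, zig t ≤ 2 * t ∧ 2 * t ≤ zig t + 1 := fun t => by
    unfold zig; split <;> omega
  exact ⟨fun _ hp => MRel.refl_of_isMultichain hzig hp,
    fun _ _ _ _ hpq hqp _ => hpq.antisymm hqp,
    fun _ _ _ _ _ _ hpq hqs => hpq.zig_trans hqs⟩

/-- For the zig-zag map, ⪯_ι is a partial order on P_r:
reflexive, antisymmetric and transitive. -/
theorem zigzag_partial_order {P : Type*} [PartialOrder P] (r : ℕ) (hr : 1 ≤ r) :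
    (∀ p : ℕ → P, IsMultichain r p → MRel r zig p p) ∧
    (∀ p q : ℕ → P, IsMultichain r p → IsMultichain r q →
      MRel r zig p q → MRel r zig q p → ∀ i, 1 ≤ i → i ≤ r → p i = q i) ∧
    (∀ p q s : ℕ → P, IsMultichain r p → IsMultichain r q → IsMultichain r s →
      MRel r zig p q → MRel r zig q s → MRel r zig p s) :=
  zigzag_partial_order_general r
end

section
/- If every chain in P has length at most 1 (i.e., P contains no 3-element chain), then for all ι, ȷ ∈ 𝓘 the comparability graphs agree: for all 𝔭, 𝔮 ∈ P_r, (𝔭 ⪯_ι 𝔮 or 𝔮 ⪯_ι 𝔭) if and only if (𝔭 ⪯_ȷ 𝔮 or 𝔮 ⪯_ȷ 𝔭). -/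
/-- Membership in the family `𝓘`: `ι 1 = 1` and `ι t ∈ {2t−1, 2t}` for `t ∈ [r]`. -/
def InI (r : ℕ) (ι : ℕ → ℕ) : Prop :=
  ι 1 = 1 ∧ ∀ t, 1 ≤ t → t ≤ r → ι t = 2 * t - 1 ∨ ι t = 2 * t

/-! Since `κ t ∈ {2t - 1, 2t}`, the condition `s + t ≤ κ t` of `⪯_κ` reads `s < t` for `s ≠ t`,
so only the diagonal entries of `⪯_κ` depend on `κ`. Off the diagonal, `⪯_κ` says that `p` and `q`
interleave; with multichains and no 3-element chain this forces `p t = q t` at all indices but one,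
and a single free diagonal entry can be put in either direction by choosing between `𝔭 ⪯_κ 𝔮` and
`𝔮 ⪯_κ 𝔭`. Hence comparability under `⪯_κ` is the same condition for every `κ ∈ 𝓘`. -/

open Relation

section

variable {P : Type*} [PartialOrder P] {r : ℕ} {κ : ℕ → ℕ} {p q : ℕ → P}

def OffDiagLE (r : ℕ) (p q : ℕ → P) : Prop :=
  ∀ s t, 1 ≤ s → s < t → t ≤ r → p s ≤ q t ∧ q s ≤ p t

-- `s = t` satisfies `s + t ≤ κ t` exactly when `κ t = 2t`.
def DiagLE (κ : ℕ → ℕ) (p q : ℕ → P) (t : ℕ) : Prop :=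
  if κ t = 2 * t then q t ≤ p t else p t ≤ q t

theorem OffDiagLE.symm (h : OffDiagLE r p q) : OffDiagLE r q p :=
  fun s t hs hst ht => (h s t hs hst ht).symm

theorem DiagLE.symmGen {t : ℕ} (h : DiagLE κ p q t) : SymmGen (· ≤ ·) (p t) (q t) := by
  unfold DiagLE at h
  split_ifs at h
  exacts [.of_ge h, .of_le h]

theorem diagLE_of_eq {t : ℕ} (h : p t = q t) : DiagLE κ p q t := by
  unfold DiagLE
  split_ifs
  exacts [h.ge, h.le]

theorem diagLE_or_diagLE {t : ℕ} (h : SymmGen (· ≤ ·) (p t) (q t)) :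
    DiagLE κ p q t ∨ DiagLE κ q p t := by
  unfold DiagLE SymmGen at *
  split_ifs <;> tauto

theorem mrel_iff (hκ : ∀ t, 1 ≤ t → t ≤ r → κ t = 2 * t - 1 ∨ κ t = 2 * t) :
    MRel r κ p q ↔ OffDiagLE r p q ∧ ∀ t, 1 ≤ t → t ≤ r → DiagLE κ p q t := by
  constructor
  · intro h
    refine ⟨fun s t hs hst ht => ⟨(h s t hs (by omega) (by omega) ht).2 ?_,
      (h t s (by omega) ht hs (by omega)).1 ?_⟩, fun t ht htr => ?_⟩
    · rcases hκ s hs (by omega) with hk | hk <;> omega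
    · rcases hκ t (by omega) ht with hk | hk <;> omega
    · unfold DiagLE
      split_ifs with hk
      · exact (h t t ht htr ht htr).1 (by omega)
      · exact (h t t ht htr ht htr).2 (by rcases hκ t ht htr with hk' | hk' <;> omega)
  · rintro ⟨hoff, hdiag⟩ t s ht htr hs hsr
    have hk := hκ t ht htr
    rcases lt_trichotomy s t with hst | rfl | hts
    · exact ⟨fun _ => (hoff s t hs hst htr).2, fun h => absurd h (by omega)⟩
    · have hd := hdiag s ht htr
      unfold DiagLE at hd
      split_ifs at hd
      · exact ⟨fun _ => hd, fun h => absurd h (by omega)⟩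
      · exact ⟨fun h => absurd h (by omega), fun _ => hd⟩
    · exact ⟨fun h => absurd h (by omega), fun _ => (hoff t s ht hts hsr).1⟩

theorem eq_or_eq_of_offDiagLE (h3 : ¬ ∃ x y z : P, x < y ∧ y < z)
    (hp : IsMultichain r p) (hq : IsMultichain r q) (hoff : OffDiagLE r p q)
    {t t' : ℕ} (ht : 1 ≤ t) (htt' : t < t') (ht' : t' ≤ r)
    (hc : SymmGen (· ≤ ·) (p t) (q t)) (hc' : SymmGen (· ≤ ·) (p t') (q t')) :
    p t = q t ∨ p t' = q t' := by
  wlog hlt : p t < q t generalizing p q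
  · by_cases heq : p t = q t
    · exact .inl heq
    have hgt : q t < p t :=
      lt_of_le_of_ne (hc.resolve_left fun h => hlt (lt_of_le_of_ne h heq)) (Ne.symm heq)
    exact (this hq hp hoff.symm hc.symm hc'.symm hgt).imp Eq.symm Eq.symm
  right
  by_contra hne
  rcases hc' with h | h
  · exact h3 ⟨p t, p t', q t', hlt.trans_le (hoff t t' ht htt' ht').2, lt_of_le_of_ne h hne⟩
  · exact h3 ⟨p t, q t', p t', hlt.trans_le (hq t t' ht htt'.le ht'),
      lt_of_le_of_ne h (Ne.symm hne)⟩

theorem exists_forall_ne_eq_of_offDiagLE (h3 : ¬ ∃ x y z : P, x < y ∧ y < z)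
    (hp : IsMultichain r p) (hq : IsMultichain r q) (hoff : OffDiagLE r p q)
    (hc : ∀ t, 1 ≤ t → t ≤ r → SymmGen (· ≤ ·) (p t) (q t)) :
    ∃ t₀, ∀ t, 1 ≤ t → t ≤ r → t ≠ t₀ → p t = q t := by
  by_cases h : ∃ t₀, 1 ≤ t₀ ∧ t₀ ≤ r ∧ p t₀ ≠ q t₀
  · obtain ⟨t₀, ht₀, ht₀r, hne⟩ := h
    refine ⟨t₀, fun t ht htr htt₀ => ?_⟩
    rcases lt_or_gt_of_ne htt₀ with hlt | hgt
    · exact (eq_or_eq_of_offDiagLE h3 hp hq hoff ht hlt ht₀r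
        (hc t ht htr) (hc t₀ ht₀ ht₀r)).resolve_right hne
    · exact (eq_or_eq_of_offDiagLE h3 hp hq hoff ht₀ hgt htr
        (hc t₀ ht₀ ht₀r) (hc t ht htr)).resolve_left hne
  · push Not at h
    exact ⟨0, fun t ht htr _ => h t ht htr⟩

theorem symmGen_mrel_iff (h3 : ¬ ∃ x y z : P, x < y ∧ y < z)
    (hκ : ∀ t, 1 ≤ t → t ≤ r → κ t = 2 * t - 1 ∨ κ t = 2 * t)
    (hp : IsMultichain r p) (hq : IsMultichain r q) :
    SymmGen (MRel r κ) p q ↔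
      OffDiagLE r p q ∧ ∀ t, 1 ≤ t → t ≤ r → SymmGen (· ≤ ·) (p t) (q t) := by
  unfold SymmGen
  simp only [mrel_iff hκ]
  constructor
  · rintro (⟨hoff, hd⟩ | ⟨hoff, hd⟩)
    · exact ⟨hoff, fun t ht htr => (hd t ht htr).symmGen⟩
    · exact ⟨hoff.symm, fun t ht htr => (hd t ht htr).symmGen.symm⟩
  · rintro ⟨hoff, hc⟩
    obtain ⟨t₀, heq⟩ := exists_forall_ne_eq_of_offDiagLE h3 hp hq hoff hc
    by_cases hd : DiagLE κ p q t₀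
    · refine .inl ⟨hoff, fun t ht htr => ?_⟩
      by_cases htt₀ : t = t₀
      · exact htt₀ ▸ hd
      · exact diagLE_of_eq (heq t ht htr htt₀)
    · refine .inr ⟨hoff.symm, fun t ht htr => ?_⟩
      by_cases htt₀ : t = t₀
      · subst htt₀
        exact (diagLE_or_diagLE (hc t ht htr)).resolve_left hd
      · exact diagLE_of_eq (heq t ht htr htt₀).symm

end

/-- If P has no 3-element chain, then for all ι, κ ∈ 𝓘 the comparability
graphs of ⪯_ι and ⪯_κ on P_r agree. -/
theorem graphs_agree_short_chains {P : Type*} [PartialOrder P]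
    (h3 : ¬ ∃ x y z : P, x < y ∧ y < z) (r : ℕ)
    (ι κ : ℕ → ℕ) (hι : InI r ι) (hκ : InI r κ)
    (p q : ℕ → P) (hp : IsMultichain r p) (hq : IsMultichain r q) :
    (MRel r ι p q ∨ MRel r ι q p) ↔ (MRel r κ p q ∨ MRel r κ q p) :=
  (symmGen_mrel_iff h3 hι.2 hp hq).trans (symmGen_mrel_iff h3 hκ.2 hp hq).symm
end

section
/- If P contains a chain p < q < s of three elements, then for distinct ι, ȷ ∈ 𝓘 the comparability graphs of ⪯_ι and ⪯_ȷ on P_r differ: there exist 𝔭 ≠ 𝔮 in P_r with 𝔭 ⪯_ι 𝔮 but neither 𝔭 ⪯_ȷ 𝔮 nor 𝔮 ⪯_ȷ 𝔭. -/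
/-!
Let `k` be an index with `ι k ≠ κ k`; then `k ≥ 2`, since both maps fix `1`. With
`m = ι k - k ∈ {k - 1, k}` take `𝔮 = (y, …, y, z, …, z)` with its last `y` at place `m` and
`𝔭 = (x, y, …, y, z, …, z)` with its last `y` at place `2k - m - 1`. The two cut points are
chosen so that `𝔭 ⪯_ι 𝔮` holds, while `{𝔭 k, 𝔮 k} = {y, z}` in the order that the `(k, k)`
condition of `⪯_κ` forbids. The reverse relation `𝔮 ⪯_κ 𝔭` already fails at `(1, 1)`,
where it demands `y ≤ x`.
-/

section

variable {P : Type*} [PartialOrder P]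

theorem IsMultichain.of_monotone {r : ℕ} {p : ℕ → P} (hp : Monotone p) : IsMultichain r p :=
  fun _ _ _ hij _ => hp hij

theorem monotone_ite_lt {f g : ℕ → P} (hf : Monotone f) (hg : Monotone g)
    (hfg : ∀ t, f t ≤ g t) (c : ℕ) : Monotone fun t => if t < c then f t else g t := by
  intro i j hij
  dsimp only
  split_ifs with hi hj hj
  · exact hf hij
  · exact (hf hij).trans (hfg j)
  · omega
  · exact hg hij

theorem MRel.le_of_lt_two_mul {r t : ℕ} {ι : ℕ → ℕ} {p q : ℕ → P} (h : MRel r ι p q)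
    (ht : 1 ≤ t) (htr : t ≤ r) (hιt : ι t < 2 * t) : p t ≤ q t :=
  (h t t ht htr ht htr).2 (by omega)

theorem MRel.le_of_two_mul_le {r t : ℕ} {ι : ℕ → ℕ} {p q : ℕ → P} (h : MRel r ι p q)
    (ht : 1 ≤ t) (htr : t ≤ r) (hιt : 2 * t ≤ ι t) : q t ≤ p t :=
  (h t t ht htr ht htr).1 (by omega)

theorem mrel_ite_lt_of_bounds {x y z : P} (hxy : x ≤ y) (hyz : y ≤ z) {r a b : ℕ} {ι : ℕ → ℕ}
    (hι1 : ι 1 ≤ 1)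
    (hlow : ∀ t, 2 ≤ t → t ≤ r → t < a → ι t < t + b)
    (hhigh : ∀ t, 2 ≤ t → t ≤ r → a ≤ t → t + b ≤ ι t + 1) :
    MRel r ι (fun t => if t < 2 then x else if t < a then y else z)
      (fun s => if s < b then y else z) := by
  intro t s ht htr hs hsr
  dsimp only
  by_cases ht2 : t < 2
  · have ht1 : t = 1 := by omega
    subst ht1
    refine ⟨fun h => by omega, fun _ => ?_⟩
    split_ifs
    exacts [hxy, hxy.trans hyz]
  by_cases hta : t < a
  · have := hlow t (by omega) htr hta
    refine ⟨fun h => ?_, fun _ => ?_⟩ <;> split_ifs <;> first | rfl | exact hyz | omega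
  · have := hhigh t (by omega) htr (by omega)
    refine ⟨fun _ => ?_, fun h => ?_⟩ <;> split_ifs <;> first | rfl | exact hyz | omega

theorem InI.mrel_ite_lt {r k : ℕ} {ι : ℕ → ℕ} (hι : InI r ι) {x y z : P} (hxy : x ≤ y)
    (hyz : y ≤ z) (hk : 1 ≤ k) (hkr : k ≤ r) :
    MRel r ι (fun t => if t < 2 then x else if t < 2 * k - (ι k - k) then y else z)
      (fun s => if s < ι k - k + 1 then y else z) := by
  have hιk := hι.2 k hk hkr
  refine mrel_ite_lt_of_bounds hxy hyz hι.1.le (fun t ht htr hta => ?_) (fun t ht htr hta => ?_) <;>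
    rcases eq_or_ne t k with rfl | htk <;> rcases hι.2 t (by omega) htr with hιt | hιt <;> omega

end

/-- If P contains a 3-element chain, then distinct ι, κ ∈ 𝓘 give different
comparability graphs on P_r. -/
theorem graphs_differ {P : Type*} [PartialOrder P] (r : ℕ) (hr : 1 ≤ r)
    (x y z : P) (h1 : x < y) (h2 : y < z)
    (ι κ : ℕ → ℕ) (hι : InI r ι) (hκ : InI r κ)
    (hne : ∃ k, 1 ≤ k ∧ k ≤ r ∧ ι k ≠ κ k) :
    ∃ p q : ℕ → P, IsMultichain r p ∧ IsMultichain r q ∧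
      (∃ k, 1 ≤ k ∧ k ≤ r ∧ p k ≠ q k) ∧
      MRel r ι p q ∧ ¬ MRel r κ p q ∧ ¬ MRel r κ q p := by
  obtain ⟨k, hk, hkr, hικ⟩ := hne
  have hk2 : 2 ≤ k := by
    by_contra! hk1
    exact hικ (by rw [show k = 1 by omega, hι.1, hκ.1])
  set m := ι k - k
  set p : ℕ → P := fun t => if t < 2 then x else if t < 2 * k - m then y else z
  set q : ℕ → P := fun s => if s < m + 1 then y else z
  have hιk := hι.2 k hk hkr
  have hdiag : (p k = y ∧ q k = z ∧ κ k = 2 * k) ∨ (p k = z ∧ q k = y ∧ κ k < 2 * k) := by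
    rcases hκ.2 k hk hkr with hκk | hκk
    · right; simp only [p, q]; split_ifs <;> first | omega | exact ⟨rfl, rfl, by omega⟩
    · left; simp only [p, q]; split_ifs <;> first | omega | exact ⟨rfl, rfl, hκk⟩
  have hp : IsMultichain r p :=
    .of_monotone (monotone_ite_lt monotone_const (monotone_ite_lt monotone_const monotone_const
      (fun _ => h2.le) _) (fun _ => by split_ifs; exacts [h1.le, (h1.trans h2).le]) _)
  have hq : IsMultichain r q :=
    .of_monotone (monotone_ite_lt monotone_const monotone_const (fun _ => h2.le) _)
  refine ⟨p, q, hp, hq, ⟨k, hk, hkr, ?_⟩, hι.mrel_ite_lt h1.le h2.le hk hkr,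
    fun hκpq => ?_, fun hκqp => ?_⟩
  · rcases hdiag with ⟨hpk, hqk, -⟩ | ⟨hpk, hqk, -⟩ <;> rw [hpk, hqk]
    exacts [h2.ne, h2.ne']
  · rcases hdiag with ⟨hpk, hqk, hκk⟩ | ⟨hpk, hqk, hκk⟩
    · exact h2.not_ge (hpk ▸ hqk ▸ hκpq.le_of_two_mul_le hk hkr hκk.ge)
    · exact h2.not_ge (hpk ▸ hqk ▸ hκpq.le_of_lt_two_mul hk hkr hκk)
  · have := hκqp.le_of_lt_two_mul le_rfl hr (by rw [hκ.1]; omega)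
    simp only [p, q, if_pos (show 1 < m + 1 by omega), if_pos (show 1 < 2 by omega)] at this
    exact h1.not_ge this
end

section
/- Let 𝔭 ≠ 𝔮 in P_r and suppose there is exactly one k ∈ [r] with p_k ≠ q_k, say p_k < q_k. Then for every ι ∈ 𝓘: if ι(k) = 2k − 1 then 𝔭 ⪯_ι 𝔮, and if ι(k) = 2k then 𝔮 ⪯_ι 𝔭. -/
/-! Since `p ≤ q` pointwise, `p i ≤ q j` whenever `i ≤ j`; since `p` and `q` agree off `k`, also
`q i ≤ p j` whenever `i ≤ j`, except for the diagonal pair `i = j = k`. The constraint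
`ι t ∈ {2t - 1, 2t}` turns the two clauses of `⪯_ι` into `s ≤ t` and `t ≤ s` respectively, and the
choice of `ι k` decides on which side the diagonal pair `(k, k)` falls, hence which of the two
relations holds. -/

section

variable {P : Type*} [PartialOrder P] {r k : ℕ} {ι : ℕ → ℕ} {p q : ℕ → P}

theorem IsMultichain.le_of_pointwise_le (hp : IsMultichain r p)
    (hpq : ∀ j, 1 ≤ j → j ≤ r → p j ≤ q j) (i j : ℕ) (hi : 1 ≤ i) (hij : i ≤ j) (hj : j ≤ r) :
    p i ≤ q j :=
  (hp i j hi hij hj).trans (hpq j (hi.trans hij) hj)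

theorem IsMultichain.le_of_eq_off (hp : IsMultichain r p) (hq : IsMultichain r q)
    (heq : ∀ j, 1 ≤ j → j ≤ r → j ≠ k → p j = q j) (i j : ℕ) (hi : 1 ≤ i) (hij : i ≤ j)
    (hj : j ≤ r) (hk : i ≠ k ∨ j ≠ k) : q i ≤ p j := by
  rcases hk with hik | hjk
  · rw [← heq i hi (hij.trans hj) hik]
    exact hp i j hi hij hj
  · rw [heq j (hi.trans hij) hj hjk]
    exact hq i j hi hij hj

theorem MRel.of_apply_eq_two_mul_sub_one
    (hι : ∀ t, 1 ≤ t → t ≤ r → ι t = 2 * t - 1 ∨ ι t = 2 * t) (hk : ι k = 2 * k - 1)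
    (hpq : ∀ i j, 1 ≤ i → i ≤ j → j ≤ r → p i ≤ q j)
    (hqp : ∀ i j, 1 ≤ i → i ≤ j → j ≤ r → (i ≠ k ∨ j ≠ k) → q i ≤ p j) :
    MRel r ι p q := by
  intro t s ht htr hs hsr
  have hιt := hι t ht htr
  refine ⟨fun hst => hqp s t hs (by omega) htr ?_, fun hts => hpq t s ht (by omega) hsr⟩
  rcases eq_or_ne t k with rfl | _ <;> omega

theorem MRel.of_apply_eq_two_mul
    (hι : ∀ t, 1 ≤ t → t ≤ r → ι t = 2 * t - 1 ∨ ι t = 2 * t) (hk : ι k = 2 * k)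
    (hpq : ∀ i j, 1 ≤ i → i ≤ j → j ≤ r → p i ≤ q j)
    (hqp : ∀ i j, 1 ≤ i → i ≤ j → j ≤ r → (i ≠ k ∨ j ≠ k) → q i ≤ p j) :
    MRel r ι q p := by
  intro t s ht htr hs hsr
  have hιt := hι t ht htr
  refine ⟨fun hst => hpq s t hs (by omega) htr, fun hts => hqp t s ht (by omega) hsr ?_⟩
  rcases eq_or_ne t k with rfl | _ <;> omega

end

theorem single_difference_edge_general {P : Type*} [PartialOrder P] (r : ℕ)
    (ι : ℕ → ℕ) (hι : InI r ι)
    (p q : ℕ → P) (hp : IsMultichain r p) (hq : IsMultichain r q)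
    (k : ℕ) (hlt : p k < q k)
    (heq : ∀ j, 1 ≤ j → j ≤ r → j ≠ k → p j = q j) :
    (ι k = 2 * k - 1 → MRel r ι p q) ∧ (ι k = 2 * k → MRel r ι q p) := by
  have hle : ∀ j, 1 ≤ j → j ≤ r → p j ≤ q j := fun j hj hjr => by
    by_cases hjk : j = k
    · exact hjk ▸ hlt.le
    · exact (heq j hj hjr hjk).le
  have hpq := hp.le_of_pointwise_le hle
  have hqp := hp.le_of_eq_off hq heq
  exact ⟨fun hk => .of_apply_eq_two_mul_sub_one hι.2 hk hpq hqp,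
    fun hk => .of_apply_eq_two_mul hι.2 hk hpq hqp⟩

/-- If 𝔭 and 𝔮 differ exactly at one index k with p k < q k, then for each
ι ∈ 𝓘: ι k = 2k−1 gives 𝔭 ⪯_ι 𝔮 and ι k = 2k gives 𝔮 ⪯_ι 𝔭. -/
theorem single_difference_edge {P : Type*} [PartialOrder P] (r : ℕ)
    (ι : ℕ → ℕ) (hι : InI r ι)
    (p q : ℕ → P) (hp : IsMultichain r p) (hq : IsMultichain r q)
    (k : ℕ) (hk1 : 1 ≤ k) (hkr : k ≤ r) (hlt : p k < q k)
    (heq : ∀ j, 1 ≤ j → j ≤ r → j ≠ k → p j = q j) :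
    (ι k = 2 * k - 1 → MRel r ι p q) ∧ (ι k = 2 * k → MRel r ι q p) :=
  single_difference_edge_general r ι hι p q hp hq k hlt heq
end
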